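/- arXiv:1205.4441 — 4 statements merged into one kernel-verified Lean document; each statement's English description precedes it below -/
import Mathlib

section
/- Let Θ : Ω → Ψ be measurable, {P_θ}_{θ∈Ψ} a disintegration of P over P_Θ consistent with Θ. Suppose T is countably generated, I is a countable index set, {X_i}_{i∈I} are measurable maps Ω → Y, and {k_i}_{i∈I} are T-Z-Markov kernels. Then the following are equivalent: (i) for each i∈I and each B∈T, ω ↦ k_i(B,Θ(ω)) is a version of P(X_i⁻¹(B) | σ(Θ)); (ii) for P_Θ-almost all θ∈Ψ, for every i∈I the pushforward of P_θ under X_i equals k_i(·,θ). -/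
/-!
Both conditions only involve the functions `θ ↦ k_i(B, θ)` up to `P_Θ`-null sets. Consistency of
the disintegration gives `∫_D P_θ(S) dP_Θ = P(S ∩ Θ⁻¹ D)`, which is exactly the property that
characterises a version of `P(S | σ(Θ))` read along `Θ`; hence (i) says that `k_i(B, ·)` and
`P_·(X_i⁻¹ B)` agree `P_Θ`-a.e. for every `i` and `B`. As `T` is generated by a countable
π-system, countably many `B` identify the measures, and as `I` is countable the exceptional null
sets can be collected into one.
-/

open MeasureTheory Set
open scoped ENNReal

theorem Set.Countable.generatePiSystem {α : Type*} {S : Set (Set α)} (hS : S.Countable) :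
    (_root_.generatePiSystem S).Countable := by
  have h : _root_.generatePiSystem S ⊆
      (fun t => ⋂₀ t) '' {t : Set (Set α) | t.Finite ∧ t ⊆ S} := by
    intro s hs
    induction hs with
    | base h =>
      exact ⟨{_}, ⟨finite_singleton _, singleton_subset_iff.2 h⟩, sInter_singleton _⟩
    | inter hs ht hne ihs iht =>
      obtain ⟨a, ⟨haf, haS⟩, rfl⟩ := ihs
      obtain ⟨b, ⟨hbf, hbS⟩, rfl⟩ := iht
      exact ⟨a ∪ b, ⟨haf.union hbf, union_subset haS hbS⟩, sInter_union a b⟩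
  exact ((countable_ofPred_finite_subset hS).image _).mono h

theorem MeasurableSpace.exists_countable_isPiSystem_generateFrom (Y : Type*)
    [m : MeasurableSpace Y] [CountablyGenerated Y] :
    ∃ S : Set (Set Y), S.Countable ∧ IsPiSystem S ∧ m = generateFrom S := by
  obtain ⟨S, hSc, rfl⟩ := CountablyGenerated.isCountablyGenerated (α := Y)
  exact ⟨_, hSc.generatePiSystem, isPiSystem_generatePiSystem S,
    generateFrom_generatePiSystem_eq.symm⟩

namespace MeasureTheory

theorem Measure.ae_eq_iff_forall_ae_apply_eq {Ψ Y : Type*} {_ : MeasurableSpace Ψ}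
    [MeasurableSpace Y] [MeasurableSpace.CountablyGenerated Y] {ρ : Measure Ψ}
    {μ ν : Ψ → Measure Y} [∀ θ, IsFiniteMeasure (μ θ)] :
    (∀ᵐ θ ∂ρ, μ θ = ν θ) ↔ ∀ B, MeasurableSet B → ∀ᵐ θ ∂ρ, μ θ B = ν θ B := by
  refine ⟨fun h B _ => h.mono fun θ hθ => by rw [hθ], fun h => ?_⟩
  obtain ⟨S, hSc, hSpi, hgen⟩ := MeasurableSpace.exists_countable_isPiSystem_generateFrom Y
  have hSmeas : ∀ B ∈ S, MeasurableSet B := fun B hB =>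
    hgen ▸ MeasurableSpace.measurableSet_generateFrom hB
  filter_upwards [(ae_ball_iff hSc).2 fun B hB => h B (hSmeas B hB), h univ .univ]
    with θ hθS hθuniv
  exact ext_of_generate_finite S hgen hSpi hθS hθuniv

variable {Ω Ψ : Type*} [MeasurableSpace Ω] [mΨ : MeasurableSpace Ψ] {P : Measure Ω}
  {Θ : Ω → Ψ}

theorem toReal_comp_ae_eq_condExp_indicator_iff_setLIntegral_eq [IsFiniteMeasure P]
    (hΘ : Measurable Θ) {f : Ψ → ℝ≥0∞} (hf : Measurable f) (hf_le : ∀ θ, f θ ≤ 1)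
    {S : Set Ω} (hS : MeasurableSet S) :
    (fun ω => (f (Θ ω)).toReal) =ᵐ[P] P[S.indicator (fun _ => (1 : ℝ)) | mΨ.comap Θ] ↔
      ∀ D, MeasurableSet D → ∫⁻ θ in D, f θ ∂(P.map Θ) = P (S ∩ Θ ⁻¹' D) := by
  have h_indicator_int : Integrable (S.indicator fun _ => (1 : ℝ)) P :=
    (integrable_const 1).indicator hS
  have h_iff : ∀ D, MeasurableSet D → (∫⁻ θ in D, f θ ∂(P.map Θ) = P (S ∩ Θ ⁻¹' D) ↔
      ∫ ω in Θ ⁻¹' D, (f (Θ ω)).toReal ∂P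
        = ∫ ω in Θ ⁻¹' D, S.indicator (fun _ => (1 : ℝ)) ω ∂P) := by
    intro D hD
    have h_fin : ∫⁻ θ in D, f θ ∂(P.map Θ) ≠ ∞ :=
      ne_top_of_le_ne_top (by simp) (setLIntegral_mono
        measurable_const fun θ _ => hf_le θ)
    rw [← ENNReal.toReal_eq_toReal_iff' h_fin (measure_ne_top _ _),
      ← integral_toReal hf.aemeasurable.restrict (ae_of_all _ fun θ => (hf_le θ).trans_lt
        ENNReal.one_lt_top), Measure.restrict_map hΘ hD,
      integral_map hΘ.aemeasurable.restrict hf.ennreal_toReal.aestronglyMeasurable,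
      setIntegral_indicator hS, setIntegral_const, inter_comm]
    simp [Measure.real]
  constructor
  · intro hg D hD
    rw [h_iff D hD, setIntegral_congr_ae (hΘ hD) (hg.mono fun ω hω _ => hω),
      setIntegral_condExp hΘ.comap_le h_indicator_int ⟨D, hD, rfl⟩]
  · intro h
    have hg_meas : Measurable[mΨ.comap Θ] fun ω => (f (Θ ω)).toReal :=
      hf.ennreal_toReal.comp (comap_measurable Θ)
    have hg_int : Integrable (fun ω => (f (Θ ω)).toReal) P :=
      .of_bound (hg_meas.mono hΘ.comap_le le_rfl).aestronglyMeasurable 1 (ae_of_all _ fun ω => by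
        simpa using ENNReal.toReal_mono ENNReal.one_ne_top (hf_le (Θ ω)))
    refine ae_eq_condExp_of_forall_setIntegral_eq hΘ.comap_le h_indicator_int
      (fun _ _ _ => hg_int.integrableOn) ?_ hg_meas.aestronglyMeasurable
    rintro _ ⟨D, hD, rfl⟩ -
    exact (h_iff D hD).1 (h D hD)

structure IsConsistentDisintegration (P : Measure Ω) (Θ : Ω → Ψ) (Pd : Ψ → Measure Ω) :
    Prop where
  isProbabilityMeasure : ∀ θ, IsProbabilityMeasure (Pd θ)
  measurable_apply : ∀ D : Set Ω, MeasurableSet D → Measurable fun θ => Pd θ D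
  lintegral_apply : ∀ D : Set Ω, MeasurableSet D → ∫⁻ θ, Pd θ D ∂(P.map Θ) = P D
  ae_apply_preimage_eq_one : ∀ D : Set Ψ, MeasurableSet D →
    ∀ᵐ θ ∂(P.map Θ).restrict D, Pd θ (Θ ⁻¹' D) = 1

namespace IsConsistentDisintegration

variable {Pd : Ψ → Measure Ω}

theorem setLIntegral_apply (h : IsConsistentDisintegration P Θ Pd) (hΘ : Measurable Θ)
    {S : Set Ω} (hS : MeasurableSet S) {D : Set Ψ} (hD : MeasurableSet D) :
    ∫⁻ θ in D, Pd θ S ∂(P.map Θ) = P (S ∩ Θ ⁻¹' D) := by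
  have := h.isProbabilityMeasure
  have h_on : ∀ᵐ θ ∂(P.map Θ).restrict D, Pd θ (S ∩ Θ ⁻¹' D) = Pd θ S := by
    filter_upwards [h.ae_apply_preimage_eq_one D hD] with θ hθ
    exact measure_inter_conull ((prob_compl_eq_zero_iff (hΘ hD)).2 hθ)
  have h_off : ∀ᵐ θ ∂(P.map Θ).restrict Dᶜ, Pd θ (S ∩ Θ ⁻¹' D) = 0 := by
    filter_upwards [h.ae_apply_preimage_eq_one Dᶜ hD.compl] with θ hθ
    exact measure_mono_null inter_subset_right ((prob_compl_eq_one_iff (hΘ hD)).1 hθ)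
  calc ∫⁻ θ in D, Pd θ S ∂(P.map Θ)
      = ∫⁻ θ in D, Pd θ (S ∩ Θ ⁻¹' D) ∂(P.map Θ)
        + ∫⁻ θ in Dᶜ, Pd θ (S ∩ Θ ⁻¹' D) ∂(P.map Θ) := by
        rw [lintegral_congr_ae h_on, lintegral_congr_ae h_off, lintegral_zero, add_zero]
    _ = P (S ∩ Θ ⁻¹' D) := by
        rw [lintegral_add_compl _ hD, h.lintegral_apply _ (hS.inter (hΘ hD))]

theorem toReal_comp_ae_eq_condExp_indicator_iff [IsFiniteMeasure P]
    (h : IsConsistentDisintegration P Θ Pd) (hΘ : Measurable Θ) {f : Ψ → ℝ≥0∞}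
    (hf : Measurable f) (hf_le : ∀ θ, f θ ≤ 1) {S : Set Ω} (hS : MeasurableSet S) :
    (fun ω => (f (Θ ω)).toReal) =ᵐ[P] P[S.indicator (fun _ => (1 : ℝ)) | mΨ.comap Θ] ↔
      f =ᵐ[P.map Θ] fun θ => Pd θ S := by
  rw [toReal_comp_ae_eq_condExp_indicator_iff_setLIntegral_eq hΘ hf hf_le hS]
  refine ⟨fun h_int => ?_, fun h_ae D hD => ?_⟩
  · exact ae_eq_of_forall_setLIntegral_eq_of_sigmaFinite hf (h.measurable_apply S hS)
      fun D hD _ => (h_int D hD).trans (h.setLIntegral_apply hΘ hS hD).symm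
  · rw [← h.setLIntegral_apply hΘ hS hD]
    exact lintegral_congr_ae (ae_restrict_of_ae h_ae)

end IsConsistentDisintegration

end MeasureTheory

open MeasureTheory

/-- With `T` countably generated and `I` countable, the kernels `k_i`
are versions of the conditional distributions of the `X_i` given `Θ` (for every `i` and
every measurable `B`) iff for `P_Θ`-almost all `θ` one has `(P_θ)∘X_i⁻¹ = k_i(·,θ)`
for all `i`. -/
theorem condDistrib_family_via_disintegration
    {Ω Y Ψ I : Type*} [MeasurableSpace Ω] [mY : MeasurableSpace Y] [mΨ : MeasurableSpace Ψ]
    [MeasurableSpace.CountablyGenerated Y] [Countable I]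
    (P : Measure Ω) [IsProbabilityMeasure P]
    (Θ : Ω → Ψ) (hΘ : Measurable Θ)
    (Pd : Ψ → Measure Ω) (hPdprob : ∀ θ, IsProbabilityMeasure (Pd θ))
    (hPdmeas : ∀ D : Set Ω, MeasurableSet D → Measurable fun θ => Pd θ D)
    (hPdint : ∀ D : Set Ω, MeasurableSet D → ∫⁻ θ, Pd θ D ∂(P.map Θ) = P D)
    (hPdcons : ∀ D : Set Ψ, MeasurableSet D →
      ∀ᵐ θ ∂(P.map Θ).restrict D, Pd θ (Θ ⁻¹' D) = 1)
    (X : I → Ω → Y) (hX : ∀ i, Measurable (X i))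
    (k : I → Ψ → Measure Y) (hkprob : ∀ i θ, IsProbabilityMeasure (k i θ))
    (hkmeas : ∀ i, ∀ B : Set Y, MeasurableSet B → Measurable fun θ => k i θ B) :
    (∀ i, ∀ B : Set Y, MeasurableSet B →
        (fun ω => (k i (Θ ω) B).toReal)
          =ᵐ[P] P[(X i ⁻¹' B).indicator (fun _ => (1 : ℝ)) | MeasurableSpace.comap Θ mΨ]) ↔
      (∀ᵐ θ ∂(P.map Θ), ∀ i, (Pd θ).map (X i) = k i θ) := by
  have hPd : IsConsistentDisintegration P Θ Pd := ⟨hPdprob, hPdmeas, hPdint, hPdcons⟩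
  rw [ae_all_iff]
  refine forall_congr' fun i => ?_
  rw [Measure.ae_eq_iff_forall_ae_apply_eq]
  refine forall₂_congr fun B hB => ?_
  rw [hPd.toReal_comp_ae_eq_condExp_indicator_iff hΘ (hkmeas i B hB)
    (fun _ => prob_le_one) (hX i hB)]
  exact Filter.eventually_congr (.of_forall fun θ => by rw [Measure.map_apply (hX i) hB, eq_comm])
end

section
/- Let Θ : Ω → Ψ be measurable and {P_θ}_{θ∈Ψ} a disintegration of P over P_Θ consistent with Θ. Let I be countable, T countably generated, and {X_i}_{i∈I} measurable maps Ω → Y. Then {X_i}_{i∈I} is P-conditionally identically distributed given Θ (i.e., P(F ∩ X_i⁻¹(B)) = P(F ∩ X_j⁻¹(B)) for all i,j∈I, F∈σ(Θ), B∈T) if and only if for P_Θ-almost all θ∈Ψ the maps {X_i}_{i∈I} are identically distributed under P_θ. -/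
/-! By the disintegration, the joint law of `(Θ, X i)` under `P` is `P_Θ ⊗ₘ (X i)_* P_θ`.
Since the sets `Θ⁻¹ D ∩ X i⁻¹ B` are the preimages of measurable rectangles, conditional
identical distribution says exactly that these joint laws coincide for all `i, j`. Over a finite
base measure, two composition-products agree iff their kernels agree almost everywhere (this
is where the countable generation of `Y` enters), and countability of `I` lets the
almost-everywhere quantifier commute with `∀ i j`. -/

open MeasureTheory ProbabilityTheory Set

section

variable {Ω Ψ Y : Type*} [MeasurableSpace Ω] [MeasurableSpace Ψ] [MeasurableSpace Y]
  {P : Measure Ω} {Θ : Ω → Ψ} {κ : Kernel Ψ Ω}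

lemma measure_inter_preimage_eq_iff_map_prodMk_eq [IsFiniteMeasure P] (hΘ : Measurable Θ)
    {X X' : Ω → Y} (hX : Measurable X) (hX' : Measurable X') :
    (∀ F, MeasurableSet[MeasurableSpace.comap Θ ‹_›] F →
        ∀ B, MeasurableSet B → P (F ∩ X ⁻¹' B) = P (F ∩ X' ⁻¹' B)) ↔
      P.map (fun ω ↦ (Θ ω, X ω)) = P.map (fun ω ↦ (Θ ω, X' ω)) := by
  rw [Measure.ext_prod_iff]
  refine ⟨fun h D B hD hB ↦ ?_, ?_⟩
  · rw [Measure.map_apply (hΘ.prodMk hX) (hD.prod hB),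
      Measure.map_apply (hΘ.prodMk hX') (hD.prod hB)]
    exact h _ ⟨D, hD, rfl⟩ B hB
  · rintro h - ⟨D, hD, rfl⟩ B hB
    simpa only [Measure.map_apply (hΘ.prodMk hX) (hD.prod hB),
      Measure.map_apply (hΘ.prodMk hX') (hD.prod hB), mk_preimage_prod] using h hD hB

lemma measure_preimage_inter_eq_setLIntegral [IsMarkovKernel κ] (hΘ : Measurable Θ)
    (hint : ∀ D, MeasurableSet D → ∫⁻ θ, κ θ D ∂(P.map Θ) = P D)
    (hcons : ∀ D, MeasurableSet D → ∀ᵐ θ ∂(P.map Θ).restrict D, κ θ (Θ ⁻¹' D) = 1)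
    {D : Set Ψ} (hD : MeasurableSet D) {A : Set Ω} (hA : MeasurableSet A) :
    P (Θ ⁻¹' D ∩ A) = ∫⁻ θ in D, κ θ A ∂(P.map Θ) := by
  have h_in : ∀ᵐ θ ∂(P.map Θ).restrict D, κ θ (Θ ⁻¹' D ∩ A) = κ θ A := by
    filter_upwards [hcons D hD] with θ hθ
    rw [inter_comm, measure_inter_conull ((prob_compl_eq_zero_iff (hΘ hD)).2 hθ)]
  have h_out : ∀ᵐ θ ∂(P.map Θ).restrict Dᶜ, κ θ (Θ ⁻¹' D ∩ A) = 0 := by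
    filter_upwards [hcons Dᶜ hD.compl] with θ hθ
    rw [preimage_compl, prob_compl_eq_one_iff (hΘ hD)] at hθ
    exact measure_mono_null inter_subset_left hθ
  rw [← hint _ ((hΘ hD).inter hA), ← lintegral_add_compl _ hD, lintegral_congr_ae h_in,
    lintegral_congr_ae h_out, lintegral_zero, add_zero]

lemma map_prodMk_eq_compProd_map [IsFiniteMeasure P] [IsMarkovKernel κ] (hΘ : Measurable Θ)
    (hint : ∀ D, MeasurableSet D → ∫⁻ θ, κ θ D ∂(P.map Θ) = P D)
    (hcons : ∀ D, MeasurableSet D → ∀ᵐ θ ∂(P.map Θ).restrict D, κ θ (Θ ⁻¹' D) = 1)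
    {X : Ω → Y} (hX : Measurable X) :
    P.map (fun ω ↦ (Θ ω, X ω)) = P.map Θ ⊗ₘ κ.map X := by
  refine Measure.ext_prod fun {D B} hD hB ↦ ?_
  rw [Measure.map_apply (hΘ.prodMk hX) (hD.prod hB), Measure.compProd_apply_prod hD hB,
    mk_preimage_prod, measure_preimage_inter_eq_setLIntegral hΘ hint hcons hD (hX hB)]
  simp_rw [Kernel.map_apply' κ hX _ hB]

end

/-- For `I` countable and `T` countably generated, `{X_i}` is
`P`-conditionally identically distributed given `Θ` (i.e.
`P(F ∩ X_i⁻¹ B) = P(F ∩ X_j⁻¹ B)` for all `i, j`, `F ∈ σ(Θ)`, measurable `B`) iff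
for `P_Θ`-almost all `θ` the maps `{X_i}` are identically distributed under `P_θ`. -/
theorem condIdentDistrib_iff_ae_identDistrib
    {Ω Y Ψ I : Type*} [MeasurableSpace Ω] [mY : MeasurableSpace Y] [mΨ : MeasurableSpace Ψ]
    [MeasurableSpace.CountablyGenerated Y] [Countable I]
    (P : Measure Ω) [IsProbabilityMeasure P]
    (Θ : Ω → Ψ) (hΘ : Measurable Θ)
    (Pd : Ψ → Measure Ω) (hPdprob : ∀ θ, IsProbabilityMeasure (Pd θ))
    (hPdmeas : ∀ D : Set Ω, MeasurableSet D → Measurable fun θ => Pd θ D)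
    (hPdint : ∀ D : Set Ω, MeasurableSet D → ∫⁻ θ, Pd θ D ∂(P.map Θ) = P D)
    (hPdcons : ∀ D : Set Ψ, MeasurableSet D →
      ∀ᵐ θ ∂(P.map Θ).restrict D, Pd θ (Θ ⁻¹' D) = 1)
    (X : I → Ω → Y) (hX : ∀ i, Measurable (X i)) :
    (∀ i j : I, ∀ F : Set Ω, MeasurableSet[MeasurableSpace.comap Θ mΨ] F →
        ∀ B : Set Y, MeasurableSet B → P (F ∩ X i ⁻¹' B) = P (F ∩ X j ⁻¹' B)) ↔
      (∀ᵐ θ ∂(P.map Θ), ∀ i j : I, (Pd θ).map (X i) = (Pd θ).map (X j)) := by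
  let κ : Kernel Ψ Ω := ⟨Pd, Measure.measurable_of_measurable_coe Pd hPdmeas⟩
  have : IsMarkovKernel κ := ⟨hPdprob⟩
  have h_law (i : I) : P.map (fun ω ↦ (Θ ω, X i ω)) = P.map Θ ⊗ₘ κ.map (X i) :=
    map_prodMk_eq_compProd_map hΘ hPdint hPdcons (hX i)
  calc _ ↔ ∀ i j, P.map (fun ω ↦ (Θ ω, X i ω)) = P.map (fun ω ↦ (Θ ω, X j ω)) := by
        simp_rw [measure_inter_preimage_eq_iff_map_prodMk_eq hΘ (hX _) (hX _)]
    _ ↔ ∀ i j, κ.map (X i) =ᵐ[P.map Θ] κ.map (X j) := by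
        simp_rw [h_law, Kernel.compProd_eq_iff]
    _ ↔ _ := by
        simp_rw [Filter.EventuallyEq, Kernel.map_apply κ (hX _), ae_all_iff]
        rfl
end

section
/- Let Θ : Ω → Ψ be measurable and {P_θ}_{θ∈Ψ} a disintegration of P over P_Θ consistent with Θ. Let (W_n)_{n∈ℕ} be a sequence of real random variables on Ω and (K(θ))_{θ∈Ψ} a family of probability distributions on the Borel σ-algebra of ℝ given by a Markov kernel. Then (W_n) is P-conditionally independent given Θ with P(W_n ∈ B | σ(Θ)) = K(Θ)(B) a.s. for all n and B, if and only if for P_Θ-almost all θ the sequence (W_n) is independent under P_θ with each W_n distributed as K(θ) under P_θ. -/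
/-!
Integrating the consistency condition over `S` gives `∫_S P_θ(D) dP_Θ = P(D ∩ {Θ ∈ S})`, i.e.
`ω ↦ P_{Θ ω}(D)` is a version of `P(D | σ(Θ))`. Every conditional identity in the statement
(product formula for conditional probabilities, conditional law `K(Θ)`) therefore holds iff the
corresponding identity for `P_θ` holds for `P_Θ`-a.e. `θ`, one family of events at a time. To
exchange "for every family" with "for a.e. `θ`" one restricts to the countable π-system of
half-lines `(-∞, q)`, `q ∈ ℚ`, which already determines both independence and laws.
-/

open MeasureTheory Set

/-- Conditional independence of a family of measurable maps over a σ-algebra `F`. -/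
def CondIndepFam {Ω Y I : Type*} [MeasurableSpace Ω] (mY : MeasurableSpace Y)
    (P : Measure Ω) (F : MeasurableSpace Ω) (X : I → Ω → Y) : Prop :=
  ∀ (n : ℕ) (idx : Fin n → I), Function.Injective idx →
    ∀ E : Fin n → Set Ω,
      (∀ j, MeasurableSet[MeasurableSpace.comap (X (idx j)) mY] (E j)) →
      P[Set.indicator (⋂ j, E j) (fun _ => (1 : ℝ)) | F]
        =ᵐ[P] fun ω => ∏ j, (P[Set.indicator (E j) (fun _ => (1 : ℝ)) | F]) ω

open ProbabilityTheory
open scoped ENNReal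

section Independence

variable {Ω ι β : Type*} {mΩ : MeasurableSpace Ω} {μ : Measure Ω}

theorem iIndepSets_iff_fin (π : ι → Set (Set Ω)) :
    iIndepSets π μ ↔ ∀ (n : ℕ) (idx : Fin n → ι), Function.Injective idx →
      ∀ f : Fin n → Set Ω, (∀ j, f j ∈ π (idx j)) → μ (⋂ j, f j) = ∏ j, μ (f j) := by
  classical
  rw [iIndepSets_iff]
  constructor
  · intro h n idx hidx f hf
    have hg : ∀ j, Function.extend idx f (fun _ => univ) (idx j) = f j := hidx.extend_apply f _
    have := h (Finset.univ.image idx) (f := Function.extend idx f fun _ => univ) (by simp [hg, hf])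
    rw [Finset.set_biInter_finset_image, Finset.prod_image hidx.injOn] at this
    simpa [hg] using this
  · intro h s f hf
    have := h s.card (fun j => s.equivFin.symm j)
      (Subtype.val_injective.comp s.equivFin.symm.injective) (fun j => f (s.equivFin.symm j))
      (fun j => hf _ (s.equivFin.symm j).2)
    rwa [s.equivFin.symm.surjective.iInter_comp (fun i => f i),
      Equiv.prod_comp s.equivFin.symm (fun i => μ (f i)), Finset.prod_coe_sort s fun i => μ (f i),
      iInter_subtype (· ∈ s) fun i => f i] at this

theorem iIndepFun_iff_fin [mβ : MeasurableSpace β] (X : ι → Ω → β) :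
    iIndepFun X μ ↔ ∀ (n : ℕ) (idx : Fin n → ι), Function.Injective idx →
      ∀ E : Fin n → Set Ω, (∀ j, MeasurableSet[mβ.comap (X (idx j))] (E j)) →
        μ (⋂ j, E j) = ∏ j, μ (E j) := by
  rw [iIndepFun_iff_iIndep, iIndep_iff_iIndepSets, iIndepSets_iff_fin]
  rfl

theorem iIndepFun_of_isPiSystem [mβ : MeasurableSpace β] {C : Set (Set β)} (hC_pi : IsPiSystem C)
    (hC_gen : mβ = MeasurableSpace.generateFrom C) {X : ι → Ω → β} (hX : ∀ i, Measurable (X i))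
    (h : ∀ (n : ℕ) (idx : Fin n → ι), Function.Injective idx → ∀ t : Fin n → Set β,
      (∀ j, t j ∈ C) → μ (⋂ j, X (idx j) ⁻¹' t j) = ∏ j, μ (X (idx j) ⁻¹' t j)) :
    iIndepFun X μ := by
  rw [iIndepFun_iff_iIndep]
  refine iIndepSets.iIndep (fun i => (hX i).comap_le) (fun i => preimage (X i) '' C)
    (fun i => hC_pi.comap (X i)) (fun i => by rw [hC_gen, MeasurableSpace.comap_generateFrom])
    ((iIndepSets_iff_fin _).2 fun n idx hidx f hf => ?_)
  choose t ht hft using hf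
  simp_rw [← hft]
  exact h n idx hidx t ht

end Independence

section Families

variable {Ω Ψ ι β : Type*} {mΩ : MeasurableSpace Ω} {mΨ : MeasurableSpace Ψ} {ν : Measure Ψ}
  {Q : Ψ → Measure Ω}
  [mβ : MeasurableSpace β] {C : Set (Set β)}

theorem ae_iIndepFun_iff [Countable ι] (hC_count : C.Countable) (hC_pi : IsPiSystem C)
    (hC_gen : mβ = MeasurableSpace.generateFrom C) {X : ι → Ω → β} (hX : ∀ i, Measurable (X i)) :
    (∀ᵐ θ ∂ν, iIndepFun X (Q θ)) ↔ ∀ (n : ℕ) (idx : Fin n → ι), Function.Injective idx →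
      ∀ E : Fin n → Set Ω, (∀ j, MeasurableSet[mβ.comap (X (idx j))] (E j)) →
        ∀ᵐ θ ∂ν, Q θ (⋂ j, E j) = ∏ j, Q θ (E j) := by
  constructor
  · intro h n idx hidx E hE
    filter_upwards [h] with θ hθ using (iIndepFun_iff_fin X).1 hθ n idx hidx E hE
  intro h
  have : Countable C := hC_count.to_subtype
  have hCm : ∀ t ∈ C, MeasurableSet t := fun t ht =>
    hC_gen ▸ MeasurableSpace.measurableSet_generateFrom ht
  have hC : ∀ᵐ θ ∂ν, ∀ (n : ℕ) (idx : Fin n → ι) (t : Fin n → C), Function.Injective idx →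
      Q θ (⋂ j, X (idx j) ⁻¹' t j) = ∏ j, Q θ (X (idx j) ⁻¹' t j) := by
    simp only [ae_all_iff, Filter.eventually_imp_distrib_left]
    exact fun n idx t hidx => h n idx hidx _ fun j => ⟨t j, hCm _ (t j).2, rfl⟩
  filter_upwards [hC] with θ hθ
  exact iIndepFun_of_isPiSystem hC_pi hC_gen hX fun n idx hidx t ht =>
    hθ n idx (fun j => ⟨t j, ht j⟩) hidx

theorem ae_map_eq_iff (hC_count : C.Countable) (hC_pi : IsPiSystem C)
    (hC_gen : mβ = MeasurableSpace.generateFrom C) {X : Ω → β} (hX : Measurable X)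
    (hQ : ∀ θ, IsProbabilityMeasure (Q θ)) {K : Ψ → Measure β}
    (hK : ∀ θ, IsProbabilityMeasure (K θ)) :
    (∀ᵐ θ ∂ν, (Q θ).map X = K θ) ↔
      ∀ B : Set β, MeasurableSet B → ∀ᵐ θ ∂ν, Q θ (X ⁻¹' B) = K θ B := by
  constructor
  · intro h B hB
    filter_upwards [h] with θ hθ
    rw [← hθ, Measure.map_apply hX hB]
  intro h
  have : Countable C := hC_count.to_subtype
  have hCm : ∀ t ∈ C, MeasurableSet t := fun t ht =>
    hC_gen ▸ MeasurableSpace.measurableSet_generateFrom ht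
  have hC : ∀ᵐ θ ∂ν, ∀ t : C, Q θ (X ⁻¹' t) = K θ t :=
    ae_all_iff.2 fun t => h t (hCm t t.2)
  filter_upwards [hC] with θ hθ
  have := hQ θ
  have := hK θ
  have : IsProbabilityMeasure ((Q θ).map X) := Measure.isProbabilityMeasure_map hX.aemeasurable
  refine ext_of_generate_finite C hC_gen hC_pi (fun t ht => ?_) (by simp)
  rw [Measure.map_apply hX (hCm t ht)]
  exact hθ ⟨t, ht⟩

end Families

section Disintegration

variable {Ω Ψ : Type*} {mΩ : MeasurableSpace Ω} [mΨ : MeasurableSpace Ψ] {P : Measure Ω}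
  {Θ : Ω → Ψ}

theorem toReal_comp_ae_eq_iff (hΘ : Measurable Θ) {f g : Ψ → ℝ≥0∞} (hf : Measurable f)
    (hg : Measurable g) (hf_ne : ∀ θ, f θ ≠ ∞) (hg_ne : ∀ θ, g θ ≠ ∞) :
    ((fun ω => (f (Θ ω)).toReal) =ᵐ[P] fun ω => (g (Θ ω)).toReal) ↔
      ∀ᵐ θ ∂P.map Θ, f θ = g θ := by
  rw [ae_map_iff hΘ.aemeasurable (measurableSet_eq_fun hf hg)]
  simp only [Filter.EventuallyEq, ENNReal.toReal_eq_toReal_iff' (hf_ne _) (hg_ne _)]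

structure IsDisintegration (P : Measure Ω) (Θ : Ω → Ψ) (Pd : Ψ → Measure Ω) : Prop where
  isProbabilityMeasure : ∀ θ, IsProbabilityMeasure (Pd θ)
  measurable_apply : ∀ D : Set Ω, MeasurableSet D → Measurable fun θ => Pd θ D
  lintegral_apply : ∀ D : Set Ω, MeasurableSet D → ∫⁻ θ, Pd θ D ∂(P.map Θ) = P D
  ae_restrict_apply_preimage : ∀ D : Set Ψ, MeasurableSet D →
    ∀ᵐ θ ∂(P.map Θ).restrict D, Pd θ (Θ ⁻¹' D) = 1

namespace IsDisintegration

variable {Pd : Ψ → Measure Ω} (hPd : IsDisintegration P Θ Pd)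
include hPd

theorem measure_ne_top (θ : Ψ) (D : Set Ω) : Pd θ D ≠ ∞ :=
  have := hPd.isProbabilityMeasure θ
  MeasureTheory.measure_ne_top _ _

theorem ae_restrict_apply_preimage_compl (hΘ : Measurable Θ) {S : Set Ψ} (hS : MeasurableSet S) :
    ∀ᵐ θ ∂(P.map Θ).restrict S, Pd θ (Θ ⁻¹' S)ᶜ = 0 := by
  filter_upwards [hPd.ae_restrict_apply_preimage S hS] with θ hθ
  have := hPd.isProbabilityMeasure θ
  exact (prob_compl_eq_zero_iff (hΘ hS)).2 hθ

theorem setLIntegral_apply (hΘ : Measurable Θ) {D : Set Ω} (hD : MeasurableSet D) {S : Set Ψ}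
    (hS : MeasurableSet S) : ∫⁻ θ in S, Pd θ D ∂(P.map Θ) = P (D ∩ Θ ⁻¹' S) := by
  have h_on : ∀ᵐ θ ∂(P.map Θ).restrict S, Pd θ D = Pd θ (D ∩ Θ ⁻¹' S) := by
    filter_upwards [hPd.ae_restrict_apply_preimage_compl hΘ hS] with θ hθ
    exact (measure_inter_conull hθ).symm
  have h_off : ∀ᵐ θ ∂(P.map Θ).restrict Sᶜ, Pd θ (D ∩ Θ ⁻¹' S) = 0 := by
    filter_upwards [hPd.ae_restrict_apply_preimage_compl hΘ hS.compl] with θ hθ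
    rw [preimage_compl, compl_compl] at hθ
    exact measure_mono_null inter_subset_right hθ
  calc ∫⁻ θ in S, Pd θ D ∂(P.map Θ) = ∫⁻ θ in S, Pd θ (D ∩ Θ ⁻¹' S) ∂(P.map Θ) :=
        lintegral_congr_ae h_on
    _ = ∫⁻ θ, Pd θ (D ∩ Θ ⁻¹' S) ∂(P.map Θ) := by
        rw [← lintegral_add_compl (μ := P.map Θ) _ hS, lintegral_congr_ae h_off, lintegral_zero, add_zero]
    _ = P (D ∩ Θ ⁻¹' S) := hPd.lintegral_apply _ (hD.inter (hΘ hS))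

theorem toReal_comp_ae_eq_condExp [IsFiniteMeasure P] (hΘ : Measurable Θ) {D : Set Ω}
    (hD : MeasurableSet D) :
    (fun ω => (Pd (Θ ω) D).toReal) =ᵐ[P] P[D.indicator (fun _ => (1 : ℝ)) | mΨ.comap Θ] := by
  have hg : Measurable fun θ => (Pd θ D).toReal := (hPd.measurable_apply D hD).ennreal_toReal
  have hg_int : Integrable (fun ω => (Pd (Θ ω) D).toReal) P := by
    refine (integrable_const (1 : ℝ)).mono' (hg.comp hΘ).aestronglyMeasurable
      (Filter.Eventually.of_forall fun ω => ?_)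
    have := hPd.isProbabilityMeasure (Θ ω)
    rw [Real.norm_of_nonneg ENNReal.toReal_nonneg]
    exact measureReal_le_one
  refine ae_eq_condExp_of_forall_setIntegral_eq hΘ.comap_le
    ((integrable_const (1 : ℝ)).indicator hD) (fun _ _ _ => hg_int.integrableOn) ?_
    (hg.comp (Measurable.of_comap_le le_rfl)).aestronglyMeasurable
  rintro _ ⟨S, hS, rfl⟩ -
  rw [← setIntegral_map hS hg.aestronglyMeasurable hΘ.aemeasurable,
    integral_toReal (hPd.measurable_apply D hD).aemeasurable.restrict
      (Filter.Eventually.of_forall fun θ => (hPd.measure_ne_top θ D).lt_top),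
    hPd.setLIntegral_apply hΘ hD hS, setIntegral_indicator hD, setIntegral_const, smul_eq_mul,
    mul_one, inter_comm, measureReal_def]

theorem toReal_comp_ae_eq_condExp_iff [IsFiniteMeasure P] (hΘ : Measurable Θ) {g : Ψ → ℝ≥0∞}
    (hg : Measurable g) (hg_ne : ∀ θ, g θ ≠ ∞) {D : Set Ω} (hD : MeasurableSet D) :
    ((fun ω => (g (Θ ω)).toReal) =ᵐ[P] P[D.indicator (fun _ => (1 : ℝ)) | mΨ.comap Θ]) ↔
      ∀ᵐ θ ∂P.map Θ, Pd θ D = g θ := by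
  rw [← (hPd.toReal_comp_ae_eq_condExp hΘ hD).congr_right, ae_eq_comm,
    toReal_comp_ae_eq_iff hΘ (hPd.measurable_apply D hD) hg (hPd.measure_ne_top · D) hg_ne]

theorem condIndepFam_iff [IsFiniteMeasure P] (hΘ : Measurable Θ) {Y I : Type*}
    [mY : MeasurableSpace Y] {X : I → Ω → Y} (hX : ∀ i, Measurable (X i)) :
    CondIndepFam mY P (mΨ.comap Θ) X ↔ ∀ (n : ℕ) (idx : Fin n → I), Function.Injective idx →
      ∀ E : Fin n → Set Ω, (∀ j, MeasurableSet[mY.comap (X (idx j))] (E j)) →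
        ∀ᵐ θ ∂P.map Θ, Pd θ (⋂ j, E j) = ∏ j, Pd θ (E j) := by
  refine forall₄_congr fun n idx _ E => forall_congr' fun hE => ?_
  have hEm : ∀ j, MeasurableSet (E j) := fun j => (hX (idx j)).comap_le _ (hE j)
  have h_prod : (fun ω => (∏ j, Pd (Θ ω) (E j)).toReal)
      =ᵐ[P] fun ω => ∏ j, (P[(E j).indicator (fun _ => (1 : ℝ)) | mΨ.comap Θ]) ω := by
    filter_upwards [ae_all_iff.2 fun j => hPd.toReal_comp_ae_eq_condExp hΘ (hEm j)] with ω hω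
    rw [ENNReal.toReal_prod]
    exact Finset.prod_congr rfl fun j _ => hω j
  rw [← h_prod.congr_right, ae_eq_comm, hPd.toReal_comp_ae_eq_condExp_iff hΘ
    (Finset.measurable_prod _ fun j _ => hPd.measurable_apply _ (hEm j))
    (fun θ => ENNReal.prod_ne_top fun j _ => hPd.measure_ne_top θ _) (.iInter hEm)]

end IsDisintegration

end Disintegration

/-- (Characterization of mixed renewal processes via disintegrations.)
The interarrival sequence `(W_n)` is `P`-conditionally independent given `Θ` with
conditional distribution `K(Θ)` iff for `P_Θ`-almost all `θ` the sequence is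
independent under `P_θ` with each `W_n` distributed as `K(θ)`. -/
theorem mixedRenewal_iff_ae_renewal
    {Ω Ψ : Type*} [MeasurableSpace Ω] [mΨ : MeasurableSpace Ψ]
    (P : Measure Ω) [IsProbabilityMeasure P]
    (Θ : Ω → Ψ) (hΘ : Measurable Θ)
    (Pd : Ψ → Measure Ω) (hPdprob : ∀ θ, IsProbabilityMeasure (Pd θ))
    (hPdmeas : ∀ D : Set Ω, MeasurableSet D → Measurable fun θ => Pd θ D)
    (hPdint : ∀ D : Set Ω, MeasurableSet D → ∫⁻ θ, Pd θ D ∂(P.map Θ) = P D)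
    (hPdcons : ∀ D : Set Ψ, MeasurableSet D →
      ∀ᵐ θ ∂(P.map Θ).restrict D, Pd θ (Θ ⁻¹' D) = 1)
    (W : ℕ → Ω → ℝ) (hW : ∀ n, Measurable (W n))
    (K : Ψ → Measure ℝ) (hKprob : ∀ θ, IsProbabilityMeasure (K θ))
    (hKmeas : ∀ B : Set ℝ, MeasurableSet B → Measurable fun θ => K θ B) :
    (CondIndepFam (inferInstance : MeasurableSpace ℝ) P (MeasurableSpace.comap Θ mΨ) W ∧
        ∀ (n : ℕ) (B : Set ℝ), MeasurableSet B →
          (fun ω => (K (Θ ω) B).toReal)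
            =ᵐ[P] P[(W n ⁻¹' B).indicator (fun _ => (1 : ℝ)) | MeasurableSpace.comap Θ mΨ]) ↔
      (∀ᵐ θ ∂(P.map Θ),
        ProbabilityTheory.iIndepFun W (Pd θ) ∧
          ∀ n : ℕ, (Pd θ).map (W n) = K θ) := by
  have hPd : IsDisintegration P Θ Pd := ⟨hPdprob, hPdmeas, hPdint, hPdcons⟩
  have hC_count : (⋃ a : ℚ, {Iio (a : ℝ)}).Countable :=
    countable_iUnion fun _ => countable_singleton _
  have hC_gen := (BorelSpace.measurable_eq (α := ℝ)).trans Real.borel_eq_generateFrom_Iio_rat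
  rw [hPd.condIndepFam_iff hΘ hW, Filter.eventually_and,
    ae_iIndepFun_iff hC_count Real.isPiSystem_Iio_rat hC_gen hW, ae_all_iff]
  refine and_congr Iff.rfl (forall_congr' fun n => ?_)
  rw [ae_map_eq_iff hC_count Real.isPiSystem_Iio_rat hC_gen (hW n) hPdprob hKprob]
  exact forall₂_congr fun B hB => hPd.toReal_comp_ae_eq_condExp_iff hΘ (hKmeas B hB)
    (fun θ => have := hKprob θ; measure_ne_top (K θ) B) (hW n hB)
end

section
/- Let Ω = ℝ^ℕ × (0,∞), and let P be the probability measure defined by P(E) = ∫₀^∞ (⊗_{n∈ℕ} Exp(nθ))(E^θ) · 2θe^{-2θ} dθ (mixing the product of exponential distributions with rates nθ over θ ~ Gamma(2,1)). Let W_n denote the n-th coordinate projection. Then for all w_1, w_2 ≥ 0, P(W_1 ≤ w_1, W_2 ≤ w_2) = w_2/(w_2+1) − 2[(w_1+2)⁻¹ − (w_1+2w_2+2)⁻¹]; in particular P(W_1 ≤ 2, W_2 ≤ 1) = 1/3 ≠ 2/7 = P(W_1 ≤ 1, W_2 ≤ 2), so the sequence (W_n) is not P-exchangeable. -/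
/-!
Conditionally on `θ` the first two waiting times are independent with rates `θ` and `2θ`, so
`P(W₁ ≤ w₁, W₂ ≤ w₂)` is the mixture over `θ` of `(1 - e^{-θ w₁}) (1 - e^{-2θ w₂})`.
Expanding the product, each term is a Laplace transform of the `Exp(2)` mixing density,
`∫ 2 e^{-2θ} e^{-cθ} dθ = 2 / (2 + c)`, and the resulting formula is not symmetric in `(w₁, w₂)`.
-/

open MeasureTheory ProbabilityTheory Set

lemma measure_mem_and_mem_of_cylinder {ι β : Type*} [DecidableEq ι] [MeasurableSpace β]
    {μ : Measure (ι → β)} {m : ι → Measure β}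
    (hμ : ∀ (s : Finset ι) (B : ι → Set β), (∀ n, MeasurableSet (B n)) →
      μ {g | ∀ n ∈ s, g n ∈ B n} = ∏ n ∈ s, m n (B n))
    {i j : ι} (hij : i ≠ j) {A C : Set β} (hA : MeasurableSet A) (hC : MeasurableSet C) :
    μ {g | g i ∈ A ∧ g j ∈ C} = m i A * m j C := by
  have hB : ∀ n, MeasurableSet (if n = i then A else C) := fun n => by
    split_ifs <;> assumption
  have h := hμ {i, j} _ hB
  rw [Finset.prod_pair hij, if_pos rfl, if_neg hij.symm] at h
  rw [← h]
  congr 1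
  ext g
  simp [hij.symm]

lemma expMeasure_Iic {r x : ℝ} (hr : 0 < r) (hx : 0 ≤ x) :
    expMeasure r (Iic x) = ENNReal.ofReal (1 - Real.exp (-r * x)) := by
  have := isProbabilityMeasure_expMeasure hr
  rw [← ofReal_cdf, cdf_expMeasure_eq hr, if_pos hx, neg_mul]

lemma integral_exp_neg_mul_Ioi_zero {c : ℝ} (hc : 0 < c) :
    ∫ θ in Ioi (0 : ℝ), Real.exp (-c * θ) = c⁻¹ := by
  rw [integral_exp_mul_Ioi (neg_neg_iff_pos.mpr hc)]
  simp [neg_div]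

lemma integral_mul_one_sub_exp_mul_one_sub_exp {α β γ : ℝ} (hα : 0 ≤ α) (hβ : 0 ≤ β)
    (hγ : 0 < γ) :
    ∫ θ in Ioi (0 : ℝ), (1 - Real.exp (-α * θ)) * (1 - Real.exp (-β * θ))
        * (γ * Real.exp (-γ * θ))
      = 1 - γ / (γ + α) - γ / (γ + β) + γ / (γ + α + β) := by
  have hexpand : ∀ θ : ℝ, (1 - Real.exp (-α * θ)) * (1 - Real.exp (-β * θ))
        * (γ * Real.exp (-γ * θ))
      = γ * Real.exp (-γ * θ) - γ * Real.exp (-(γ + α) * θ)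
        - γ * Real.exp (-(γ + β) * θ) + γ * Real.exp (-(γ + α + β) * θ) := by
    intro θ
    simp only [neg_add, add_mul, Real.exp_add]
    ring
  have hint : ∀ {c : ℝ}, 0 < c →
      Integrable (fun θ => γ * Real.exp (-c * θ)) (volume.restrict (Ioi 0)) :=
    fun hc => (exp_neg_integrableOn_Ioi 0 hc).const_mul γ
  have h₁ := hint hγ
  have h₂ := hint (c := γ + α) (by positivity)
  have h₃ := hint (c := γ + β) (by positivity)
  have h₄ := hint (c := γ + α + β) (by positivity)
  simp_rw [hexpand]
  rw [integral_add (by exact (h₁.sub h₂).sub h₃) h₄, integral_sub (by exact h₁.sub h₂) h₃,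
    integral_sub h₁ h₂]
  simp only [integral_const_mul]
  rw [integral_exp_neg_mul_Ioi_zero hγ, integral_exp_neg_mul_Ioi_zero (by positivity),
    integral_exp_neg_mul_Ioi_zero (by positivity), integral_exp_neg_mul_Ioi_zero (by positivity),
    mul_inv_cancel₀ hγ.ne']
  ring

lemma one_sub_exp_neg_mul_nonneg {α θ : ℝ} (hα : 0 ≤ α) (hθ : 0 ≤ θ) :
    0 ≤ 1 - Real.exp (-α * θ) :=
  sub_nonneg.mpr (Real.exp_le_one_iff.mpr (by nlinarith))

lemma lintegral_mul_one_sub_exp_mul_one_sub_exp {α β γ : ℝ} (hα : 0 ≤ α) (hβ : 0 ≤ β)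
    (hγ : 0 < γ) :
    ∫⁻ θ in Ioi (0 : ℝ), ENNReal.ofReal ((1 - Real.exp (-α * θ)) * (1 - Real.exp (-β * θ))
        * (γ * Real.exp (-γ * θ)))
      = ENNReal.ofReal (1 - γ / (γ + α) - γ / (γ + β) + γ / (γ + α + β)) := by
  set F := fun θ => (1 - Real.exp (-α * θ)) * (1 - Real.exp (-β * θ)) * (γ * Real.exp (-γ * θ))
  have hF : ∀ θ ∈ Ioi (0 : ℝ), 0 ≤ F θ ∧ F θ ≤ γ * Real.exp (-γ * θ) := by
    intro θ hθ
    have ha := one_sub_exp_neg_mul_nonneg hα (le_of_lt hθ)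
    have hb := one_sub_exp_neg_mul_nonneg hβ (le_of_lt hθ)
    have hd : 0 < γ * Real.exp (-γ * θ) := by positivity
    have ha' : 1 - Real.exp (-α * θ) ≤ 1 := by linarith [Real.exp_pos (-α * θ)]
    have hb' : 1 - Real.exp (-β * θ) ≤ 1 := by linarith [Real.exp_pos (-β * θ)]
    constructor
    · positivity
    · calc F θ ≤ 1 * (γ * Real.exp (-γ * θ)) :=
            mul_le_mul_of_nonneg_right (mul_le_one₀ ha' hb hb') hd.le
        _ = γ * Real.exp (-γ * θ) := one_mul _
  have hFint : IntegrableOn F (Ioi 0) := by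
    refine ((exp_neg_integrableOn_Ioi 0 hγ).const_mul γ).mono' (by fun_prop) ?_
    filter_upwards [ae_restrict_mem measurableSet_Ioi] with θ hθ
    rw [Real.norm_of_nonneg (hF θ hθ).1]
    exact (hF θ hθ).2
  have hFnn : 0 ≤ᵐ[volume.restrict (Ioi 0)] F := by
    filter_upwards [ae_restrict_mem measurableSet_Ioi] with θ hθ
    exact (hF θ hθ).1
  rw [← ofReal_integral_eq_lintegral_ofReal hFint hFnn,
    integral_mul_one_sub_exp_mul_one_sub_exp hα hβ hγ]

lemma mixedRenewal_jointCdf (ν : ℝ → Measure (ℕ → ℝ))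
    (hνcyl : ∀ θ : ℝ, 0 < θ → ∀ (s : Finset ℕ) (B : ℕ → Set ℝ),
      (∀ n, MeasurableSet (B n)) →
      ν θ {g : ℕ → ℝ | ∀ n ∈ s, g n ∈ B n}
        = ∏ n ∈ s, expMeasure (((n : ℝ) + 1) * θ) (B n))
    (P : Measure ((ℕ → ℝ) × ℝ))
    (hP : ∀ E : Set ((ℕ → ℝ) × ℝ), MeasurableSet E →
      P E = ∫⁻ θ in Set.Ioi (0 : ℝ),
        ν θ {ω : ℕ → ℝ | (ω, θ) ∈ E} * ENNReal.ofReal (2 * Real.exp (-2 * θ)))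
    (w₁ w₂ : ℝ) (hw₁ : 0 ≤ w₁) (hw₂ : 0 ≤ w₂) :
    P {p : (ℕ → ℝ) × ℝ | p.1 0 ≤ w₁ ∧ p.1 1 ≤ w₂}
      = ENNReal.ofReal (w₂ / (w₂ + 1) - 2 * ((w₁ + 2)⁻¹ - (w₁ + 2 * w₂ + 2)⁻¹)) := by
  have hmeas : MeasurableSet {p : (ℕ → ℝ) × ℝ | p.1 0 ≤ w₁ ∧ p.1 1 ≤ w₂} :=
    (measurableSet_Iic.preimage (by fun_prop : Measurable fun p : (ℕ → ℝ) × ℝ => p.1 0)).inter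
      (measurableSet_Iic.preimage (by fun_prop : Measurable fun p : (ℕ → ℝ) × ℝ => p.1 1))
  have hsection : ∀ θ ∈ Ioi (0 : ℝ),
      ν θ {ω : ℕ → ℝ | ω 0 ≤ w₁ ∧ ω 1 ≤ w₂} * ENNReal.ofReal (2 * Real.exp (-2 * θ))
        = ENNReal.ofReal ((1 - Real.exp (-w₁ * θ)) * (1 - Real.exp (-(2 * w₂) * θ))
            * (2 * Real.exp (-2 * θ))) := by
    intro θ (hθ : 0 < θ)
    have hcyl : ν θ {ω : ℕ → ℝ | ω 0 ≤ w₁ ∧ ω 1 ≤ w₂} = _ :=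
      measure_mem_and_mem_of_cylinder (hνcyl θ hθ) zero_ne_one measurableSet_Iic
        measurableSet_Iic
    rw [hcyl, expMeasure_Iic (by positivity) hw₁,
      expMeasure_Iic (by positivity) hw₂,
      ← ENNReal.ofReal_mul (one_sub_exp_neg_mul_nonneg (by positivity) hw₁),
      ← ENNReal.ofReal_mul (mul_nonneg (one_sub_exp_neg_mul_nonneg (by positivity) hw₁)
        (one_sub_exp_neg_mul_nonneg (by positivity) hw₂))]
    ring_nf
  rw [hP _ hmeas]
  refine (setLIntegral_congr_fun measurableSet_Ioi hsection).trans ?_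
  rw [lintegral_mul_one_sub_exp_mul_one_sub_exp hw₁ (by positivity) two_pos]
  congr 1
  field_simp
  ring

theorem nonExchangeable_mixedRenewal_example_general
    (ν : ℝ → Measure (ℕ → ℝ))
    (hνcyl : ∀ θ : ℝ, 0 < θ → ∀ (s : Finset ℕ) (B : ℕ → Set ℝ),
      (∀ n, MeasurableSet (B n)) →
      ν θ {g : ℕ → ℝ | ∀ n ∈ s, g n ∈ B n}
        = ∏ n ∈ s, expMeasure (((n : ℝ) + 1) * θ) (B n))
    (P : Measure ((ℕ → ℝ) × ℝ))
    (hP : ∀ E : Set ((ℕ → ℝ) × ℝ), MeasurableSet E →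
      P E = ∫⁻ θ in Set.Ioi (0 : ℝ),
        ν θ {ω : ℕ → ℝ | (ω, θ) ∈ E} * ENNReal.ofReal (2 * Real.exp (-2 * θ))) :
    (∀ w₁ w₂ : ℝ, 0 ≤ w₁ → 0 ≤ w₂ →
      P {p : (ℕ → ℝ) × ℝ | p.1 0 ≤ w₁ ∧ p.1 1 ≤ w₂}
        = ENNReal.ofReal (w₂ / (w₂ + 1) - 2 * ((w₁ + 2)⁻¹ - (w₁ + 2 * w₂ + 2)⁻¹))) ∧
    P {p : (ℕ → ℝ) × ℝ | p.1 0 ≤ 2 ∧ p.1 1 ≤ 1} = 1 / 3 ∧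
    P {p : (ℕ → ℝ) × ℝ | p.1 0 ≤ 1 ∧ p.1 1 ≤ 2} = 2 / 7 ∧
    ¬ (∀ a b : ℝ, P {p : (ℕ → ℝ) × ℝ | p.1 0 ≤ a ∧ p.1 1 ≤ b}
        = P {p : (ℕ → ℝ) × ℝ | p.1 0 ≤ b ∧ p.1 1 ≤ a}) := by
  have hcdf := mixedRenewal_jointCdf ν hνcyl P hP
  have h₂₁ : P {p : (ℕ → ℝ) × ℝ | p.1 0 ≤ 2 ∧ p.1 1 ≤ 1} = 1 / 3 := by
    rw [hcdf 2 1 zero_le_two zero_le_one]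
    norm_num [ENNReal.ofReal_div_of_pos]
  have h₁₂ : P {p : (ℕ → ℝ) × ℝ | p.1 0 ≤ 1 ∧ p.1 1 ≤ 2} = 2 / 7 := by
    rw [hcdf 1 2 zero_le_one zero_le_two]
    norm_num [ENNReal.ofReal_div_of_pos]
  refine ⟨hcdf, h₂₁, h₁₂, fun hexch => ?_⟩
  have h := hexch 2 1
  rw [hcdf 2 1 zero_le_two zero_le_one, hcdf 1 2 zero_le_one zero_le_two,
    ENNReal.ofReal_eq_ofReal_iff (by norm_num) (by norm_num)] at h
  norm_num at h

/-- On `Ω = ℝ^ℕ × (0,∞)`, let `P` mix the products of exponential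
distributions `Exp((n+1)θ)` (so that the `n`-th interarrival time has rate `nθ`,
`n = 1, 2, …`) over `θ ∼ Gamma(2,1)` (density `2e^{-2θ}`).  Then
`P(W₁ ≤ w₁, W₂ ≤ w₂) = w₂/(w₂+1) − 2[(w₁+2)⁻¹ − (w₁+2w₂+2)⁻¹]`; in particular
`P(W₁ ≤ 2, W₂ ≤ 1) = 1/3 ≠ 2/7 = P(W₁ ≤ 1, W₂ ≤ 2)`, hence `(W_n)` is not
`P`-exchangeable. -/
theorem nonExchangeable_mixedRenewal_example
    (ν : ℝ → Measure (ℕ → ℝ)) (hνprob : ∀ θ, IsProbabilityMeasure (ν θ))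
    (hνcyl : ∀ θ : ℝ, 0 < θ → ∀ (s : Finset ℕ) (B : ℕ → Set ℝ),
      (∀ n, MeasurableSet (B n)) →
      ν θ {g : ℕ → ℝ | ∀ n ∈ s, g n ∈ B n}
        = ∏ n ∈ s, expMeasure (((n : ℝ) + 1) * θ) (B n))
    (P : Measure ((ℕ → ℝ) × ℝ)) [IsProbabilityMeasure P]
    (hP : ∀ E : Set ((ℕ → ℝ) × ℝ), MeasurableSet E →
      P E = ∫⁻ θ in Set.Ioi (0 : ℝ),
        ν θ {ω : ℕ → ℝ | (ω, θ) ∈ E} * ENNReal.ofReal (2 * Real.exp (-2 * θ))) :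
    (∀ w₁ w₂ : ℝ, 0 ≤ w₁ → 0 ≤ w₂ →
      P {p : (ℕ → ℝ) × ℝ | p.1 0 ≤ w₁ ∧ p.1 1 ≤ w₂}
        = ENNReal.ofReal (w₂ / (w₂ + 1) - 2 * ((w₁ + 2)⁻¹ - (w₁ + 2 * w₂ + 2)⁻¹))) ∧
    P {p : (ℕ → ℝ) × ℝ | p.1 0 ≤ 2 ∧ p.1 1 ≤ 1} = 1 / 3 ∧
    P {p : (ℕ → ℝ) × ℝ | p.1 0 ≤ 1 ∧ p.1 1 ≤ 2} = 2 / 7 ∧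
    ¬ (∀ a b : ℝ, P {p : (ℕ → ℝ) × ℝ | p.1 0 ≤ a ∧ p.1 1 ≤ b}
        = P {p : (ℕ → ℝ) × ℝ | p.1 0 ≤ b ∧ p.1 1 ≤ a}) :=
  nonExchangeable_mixedRenewal_example_general ν hνcyl P hP
end
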